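/- arXiv:1408.6351 — 4 statements merged into one kernel-verified Lean document; each statement's English description precedes it below -/
import Mathlib

section
/- Let X = (V,E) be a finite connected graph with at least 2 vertices and λ_1(X) the smallest positive eigenvalue of its Laplacian. Then the Cheeger constant satisfies h(X) ≥ λ_1(X)/2. -/
/-! Rayleigh quotient bound: every `f` with `∑ f = 0` satisfies `λ₁ ‖f‖² ≤ ⟨f, Δf⟩`, since on a
connected graph the kernel of `Δ` consists of the constants. For a cut `W`, the test vector
`f = |W̄| 𝟙_W - |W| 𝟙_W̄` has `‖f‖² = |W| |W̄| |V|` and `⟨f, Δf⟩ = |V|² |E(W, W̄)|`, so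
`|E(W, W̄)| ≥ λ₁ |W| |W̄| / |V| ≥ λ₁ min(|W|, |W̄|) / 2`. -/

open scoped Classical
open Matrix Finset

namespace OrthonormalBasis

variable {ι n : Type*} [Fintype ι] [Fintype n]

theorem dotProduct_eq_sum (b : OrthonormalBasis ι ℝ (EuclideanSpace ℝ n)) (x y : n → ℝ) :
    x ⬝ᵥ y = ∑ i, (x ⬝ᵥ b i) * (b i ⬝ᵥ y) := by
  have h := b.sum_inner_mul_inner (WithLp.toLp 2 x) (WithLp.toLp 2 y)
  simp only [EuclideanSpace.inner_eq_star_dotProduct, star_trivial] at h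
  simpa only [dotProduct_comm] using h.symm

end OrthonormalBasis

namespace Matrix.PosSemidef

variable {n : Type*} [Fintype n] [DecidableEq n] {A : Matrix n n ℝ}

theorem mul_dotProduct_self_le_dotProduct_mulVec (hA : A.PosSemidef) {lam : ℝ}
    (hlam : ∀ μ : ℝ, 0 < μ → (∃ v : n → ℝ, v ≠ 0 ∧ A *ᵥ v = μ • v) → lam ≤ μ)
    {f : n → ℝ} (hf : ∀ v, A *ᵥ v = 0 → v ⬝ᵥ f = 0) :
    lam * (f ⬝ᵥ f) ≤ f ⬝ᵥ (A *ᵥ f) := by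
  set b := hA.isHermitian.eigenvectorBasis
  set μ := hA.isHermitian.eigenvalues
  have hb : ∀ i, A *ᵥ b i = μ i • b i := hA.isHermitian.mulVec_eigenvectorBasis
  have hAf : ∀ i, b i ⬝ᵥ (A *ᵥ f) = μ i * (b i ⬝ᵥ f) := fun i => by
    rw [dotProduct_mulVec, ← mulVec_transpose, show Aᵀ = A from hA.isHermitian, hb, smul_dotProduct,
      smul_eq_mul]
  rw [b.dotProduct_eq_sum f f, b.dotProduct_eq_sum f, mul_sum]
  refine sum_le_sum fun i _ => ?_
  rw [hAf, dotProduct_comm f]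
  have hμ0 : 0 ≤ μ i := hA.eigenvalues_nonneg i
  rcases hμ0.eq_or_lt with hμ | hμ
  · have hker : A *ᵥ b i = 0 := by rw [hb, ← hμ, zero_smul]
    simp [hf _ hker]
  · have hbi : (b i : n → ℝ) ≠ 0 := fun h =>
      b.orthonormal.ne_zero i (WithLp.ofLp_injective 2 h)
    have := hlam (μ i) hμ ⟨b i, hbi, hb i⟩
    nlinarith [mul_self_nonneg (b i ⬝ᵥ f)]

end Matrix.PosSemidef

namespace SimpleGraph

variable {V : Type}

def cutGraph (G : SimpleGraph V) (W : Finset V) : SimpleGraph V where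
  Adj x y := G.Adj x y ∧ (x ∈ W ↔ y ∉ W)
  symm := ⟨fun _ _ h => ⟨h.1.symm, by tauto⟩⟩
  loopless := ⟨fun _ h => iff_not_self h.2⟩

variable [Fintype V] [DecidableEq V]

theorem Connected.dotProduct_eq_zero_of_lapMatrix_mulVec_eq_zero {G : SimpleGraph V}
    (hG : G.Connected) {f v : V → ℝ} (hf : ∑ x, f x = 0) (hv : G.lapMatrix ℝ *ᵥ v = 0) : v ⬝ᵥ f = 0 := by
  obtain ⟨x₀⟩ := hG.nonempty
  have hconst : ∀ x, v x = v x₀ := fun x =>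
    G.lapMatrix_mulVec_eq_zero_iff_forall_reachable.mp hv x x₀ (hG.preconnected x x₀)
  simp only [dotProduct, hconst, ← mul_sum, hf, mul_zero]

theorem cutGraph_edgeFinset (G : SimpleGraph V) (W : Finset V) :
    (G.cutGraph W).edgeFinset =
      G.edgeFinset.filter fun e => ∃ u ∈ e, ∃ w ∈ e, u ∈ W ∧ w ∉ W := by
  ext e
  induction e using Sym2.ind with
  | _ x y =>
    rw [mem_edgeFinset]
    simp only [mem_edgeFinset, mem_filter, mem_edgeSet, Sym2.mem_iff, cutGraph]
    by_cases hx : x ∈ W <;> by_cases hy : y ∈ W <;> simp [hx, hy]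

theorem dotProduct_lapMatrix_mulVec_ite (G : SimpleGraph V) (W : Finset V) (p q : ℝ) :
    (fun v => if v ∈ W then p else q) ⬝ᵥ (G.lapMatrix ℝ *ᵥ fun v => if v ∈ W then p else q) =
      (p - q) ^ 2 * #(G.edgeFinset.filter fun e => ∃ u ∈ e, ∃ w ∈ e, u ∈ W ∧ w ∉ W) := by
  have hterm : ∀ i j, (if G.Adj i j then
      ((if i ∈ W then p else q) - if j ∈ W then p else q) ^ 2 else 0) =
      (p - q) ^ 2 * if (G.cutGraph W).Adj i j then 1 else 0 := fun i j => by
    by_cases hij : G.Adj i j <;> by_cases hi : i ∈ W <;> by_cases hj : j ∈ W <;>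
      simp [cutGraph, hij, hi, hj, sub_sq_comm q p]
  rw [← toLinearMap₂'_apply', lapMatrix_toLinearMap₂', ← cutGraph_edgeFinset]
  simp_rw [hterm, ← mul_sum, ← degree_eq_sum_if_adj]
  rw [← Nat.cast_sum, sum_degrees_eq_twice_card_edges]
  push_cast
  ring

end SimpleGraph

section CutVector

variable {V : Type} [Fintype V] [DecidableEq V]

theorem sum_ite_mem_const (W : Finset V) (p q : ℝ) :
    ∑ v, (if v ∈ W then p else q) = #W * p + #Wᶜ * q := by
  rw [← sum_add_sum_compl W]
  simp (contextual := true) [sum_ite_of_false]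

def cutVector (W : Finset V) (v : V) : ℝ := if v ∈ W then (#Wᶜ : ℝ) else -(#W : ℝ)

theorem sum_cutVector (W : Finset V) : ∑ v, cutVector W v = 0 := by
  simp only [cutVector, sum_ite_mem_const]
  ring

theorem cutVector_dotProduct_self (W : Finset V) :
    cutVector W ⬝ᵥ cutVector W = #W * #Wᶜ * (#W + #Wᶜ) := by
  simp only [dotProduct, cutVector, apply_ite (fun x : ℝ => x * x), sum_ite_mem_const]
  ring

theorem cutVector_dotProduct_lapMatrix_mulVec (G : SimpleGraph V) (W : Finset V) :
    cutVector W ⬝ᵥ (G.lapMatrix ℝ *ᵥ cutVector W) =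
      (#W + #Wᶜ) ^ 2 * #(G.edgeFinset.filter fun e => ∃ u ∈ e, ∃ w ∈ e, u ∈ W ∧ w ∉ W) := by
  unfold cutVector
  rw [G.dotProduct_lapMatrix_mulVec_ite, sub_neg_eq_add, add_comm]

end CutVector

theorem half_le_div_min {lam m a b : ℝ} (hlam : 0 ≤ lam) (ha : 0 < a) (hb : 0 < b)
    (h : lam * (a * b * (a + b)) ≤ (a + b) ^ 2 * m) : lam / 2 ≤ m / min a b := by
  have hmin : min a b * (a + b) ≤ 2 * (a * b) := by
    nlinarith [min_le_left a b, min_le_right a b]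
  have hcut : lam * (a * b) ≤ (a + b) * m := by
    refine le_of_mul_le_mul_right ?_ (add_pos ha hb)
    linarith
  rw [div_le_div_iff₀ two_pos (lt_min ha hb)]
  refine le_of_mul_le_mul_right ?_ (add_pos ha hb)
  nlinarith [mul_le_mul_of_nonneg_left hmin hlam]

theorem cheeger_ge_half_lambda_one_general
    {V : Type} [Fintype V] [DecidableEq V] (G : SimpleGraph V)
    (hconn : G.Connected) (hcard : 2 ≤ Fintype.card V) (lam : ℝ) (hpos : 0 < lam)
    (hmin : ∀ mu : ℝ, 0 < mu →
      (∃ f : V → ℝ, f ≠ 0 ∧ G.lapMatrix ℝ *ᵥ f = mu • f) → lam ≤ mu) :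
    sInf {x : ℝ | ∃ W : Finset V, W.Nonempty ∧ W ≠ Finset.univ ∧
        x = ((G.edgeFinset.filter fun e => ∃ u ∈ e, ∃ w ∈ e, u ∈ W ∧ w ∉ W).card : ℝ)
              / (min W.card Wᶜ.card : ℕ)} ≥ lam / 2 := by
  obtain ⟨v₀⟩ := hconn.nonempty
  have hv₀ : {v₀} ≠ univ := fun h => by
    have := congrArg card h
    rw [card_singleton, card_univ] at this
    omega
  refine le_csInf ⟨_, {v₀}, singleton_nonempty v₀, hv₀, rfl⟩ ?_
  rintro _ ⟨W, hW, hWc, rfl⟩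
  have hray := (G.posSemidef_lapMatrix ℝ).mul_dotProduct_self_le_dotProduct_mulVec hmin
    fun _ hv => hconn.dotProduct_eq_zero_of_lapMatrix_mulVec_eq_zero (sum_cutVector W) hv
  rw [cutVector_dotProduct_self, cutVector_dotProduct_lapMatrix_mulVec] at hray
  rw [Nat.cast_min]
  exact half_le_div_min hpos.le (by simpa using hW.card_pos)
    (by simpa [card_pos, nonempty_iff_ne_empty] using hWc) hray

/-- Let `X = (V,E)` be a finite connected graph with at least 2 vertices
and `λ₁` the smallest positive eigenvalue of its Laplacian.  Then the Cheeger constant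
`h(X) = min_{∅≠W⊊V} |E(W,W̄)|/min(|W|,|W̄|)` satisfies `h(X) ≥ λ₁/2`. -/
theorem cheeger_ge_half_lambda_one
    {V : Type} [Fintype V] [DecidableEq V] (G : SimpleGraph V)
    (hconn : G.Connected) (hcard : 2 ≤ Fintype.card V) (lam : ℝ) (hpos : 0 < lam)
    (heig : ∃ f : V → ℝ, f ≠ 0 ∧ G.lapMatrix ℝ *ᵥ f = lam • f)
    (hmin : ∀ mu : ℝ, 0 < mu →
      (∃ f : V → ℝ, f ≠ 0 ∧ G.lapMatrix ℝ *ᵥ f = mu • f) → lam ≤ mu) :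
    sInf {x : ℝ | ∃ W : Finset V, W.Nonempty ∧ W ≠ Finset.univ ∧
        x = ((G.edgeFinset.filter fun e => ∃ u ∈ e, ∃ w ∈ e, u ∈ W ∧ w ∉ W).card : ℝ)
              / (min W.card Wᶜ.card : ℕ)} ≥ lam / 2 :=
  cheeger_ge_half_lambda_one_general G hconn hcard lam hpos hmin
end

section
/- Let d ≥ 1, 1 ≤ i ≤ d, and D ∈ ℕ. There exists a constant c = c(d,i,D) such that for every finite pure d-dimensional simplicial complex X in which every vertex is contained in at most D faces, and every α ∈ C^i(X,F_2), there exists a locally minimal cochain α̃ ∈ α + B^i(X,F_2) with ||α̃|| ≤ ||α||, and a cochain γ ∈ C^{i-1}(X,F_2) with α − α̃ = δ_{i-1}(γ) and ||γ|| ≤ c·||α||. -/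
open scoped Classical

structure SComplex (V : Type) [DecidableEq V] where
  faces : Finset (Finset V)
  down_closed : ∀ σ ∈ faces, ∀ τ ⊆ σ, τ ∈ faces

namespace SComplex

variable {V : Type} [Fintype V] [DecidableEq V]

/-- The faces of cardinality `n` (i.e. of dimension `n-1`). -/
def K (X : SComplex V) (n : ℕ) : Finset (Finset V) := X.faces.filter fun σ => σ.card = n

/-- `X` is pure with all facets (maximal faces) of cardinality `D` (dimension `D-1`). -/
def IsPure (X : SComplex V) (D : ℕ) : Prop :=
  X.faces.Nonempty ∧ ∀ σ ∈ X.faces, ∃ τ ∈ X.faces, σ ⊆ τ ∧ τ.card = D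

/-- `F₂`-cochains on the faces of cardinality `n` (the space `C^{n-1}(X,F₂)`). -/
abbrev Cochain (X : SComplex V) (n : ℕ) : Type := ↥(X.K n) → ZMod 2

/-- The weight of a face `σ` of cardinality `n`, in a complex with facets of cardinality `D`:
`wt(σ) = c(σ) / (C(D,n) · #facets)` where `c(σ)` is the number of facets containing `σ`. -/
noncomputable def wt (X : SComplex V) (D n : ℕ) (σ : Finset V) : ℝ :=
  (((X.K D).filter fun τ => σ ⊆ τ).card : ℝ) / ((D.choose n : ℝ) * ((X.K D).card : ℝ))

/-- The norm `‖α‖ = Σ_{σ : α(σ)≠0} wt(σ)` of a cochain. -/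
noncomputable def cnorm (X : SComplex V) (D n : ℕ) (α : X.Cochain n) : ℝ :=
  ∑ σ ∈ (X.K n).attach, if α σ ≠ 0 then X.wt D n σ.1 else 0

/-- The coboundary map into level `n` (from cochains on faces of cardinality `n-1`). -/
def delta (X : SComplex V) (n : ℕ) (γ : X.Cochain (n - 1)) : X.Cochain n :=
  fun τ => ∑ σ ∈ (X.K (n - 1)).attach, if σ.1 ⊆ τ.1 then γ σ else 0

/-- `α` is a coboundary: `α ∈ B^{n-1}(X,F₂) = Image(δ)`. -/
def IsCobound (X : SComplex V) (n : ℕ) (α : X.Cochain n) : Prop :=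
  ∃ γ : X.Cochain (n - 1), X.delta n γ = α

/-- `α` is a cocycle: `α ∈ Z^{n-1}(X,F₂) = Ker(δ)`. -/
def IsCocycle (X : SComplex V) (n : ℕ) (α : X.Cochain n) : Prop :=
  X.delta (n + 1) α = 0

/-- `‖[α]‖ = min{‖γ‖ : γ ∈ α + B}`. -/
noncomputable def normClassB (X : SComplex V) (D n : ℕ) (α : X.Cochain n) : ℝ :=
  sInf {x : ℝ | ∃ β : X.Cochain n, X.IsCobound n β ∧ x = X.cnorm D n (α + β)}

/-- `‖{α}‖ = min{‖γ‖ : γ ∈ α + Z}`. -/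
noncomputable def normClassZ (X : SComplex V) (D n : ℕ) (α : X.Cochain n) : ℝ :=
  sInf {x : ℝ | ∃ β : X.Cochain n, X.IsCocycle n β ∧ x = X.cnorm D n (α + β)}

/-- The coboundary expansion `ε_{n-1}(X)` (for a complex with facets of cardinality `D`). -/
noncomputable def epsExp (X : SComplex V) (D n : ℕ) : ℝ :=
  sInf {x : ℝ | ∃ α : X.Cochain n, ¬ X.IsCobound n α ∧
    x = X.cnorm D (n + 1) (X.delta (n + 1) α) / X.normClassB D n α}

end SComplex

namespace SComplex

variable {V : Type} [Fintype V] [DecidableEq V]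

/-- The link of `X` at a vertex `v`: the faces `σ` with `v ∉ σ` and `σ ∪ {v} ∈ X`. -/
def link (X : SComplex V) (v : V) : SComplex V where
  faces := X.faces.filter fun σ => v ∉ σ ∧ insert v σ ∈ X.faces
  down_closed := by
    intro σ hσ τ hτ
    simp only [Finset.mem_filter] at hσ ⊢
    exact ⟨X.down_closed σ hσ.1 τ hτ, fun h => hσ.2.1 (hτ h),
      X.down_closed _ hσ.2.2 _ (Finset.insert_subset_insert v hτ)⟩

/-- The cochain `α_v` on the link induced by a cochain `α`: `α_v(σ∖{v}) = α(σ)`. -/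
def localize (X : SComplex V) (v : V) (n : ℕ) (α : X.Cochain n) :
    (X.link v).Cochain (n - 1) :=
  fun σ => if h : insert v σ.1 ∈ X.K n then α ⟨insert v σ.1, h⟩ else 0

/-- `α` is minimal: its norm realizes the minimum over its class modulo coboundaries. -/
def IsMinimal (X : SComplex V) (D n : ℕ) (α : X.Cochain n) : Prop :=
  ∀ γ : X.Cochain (n - 1), X.cnorm D n α ≤ X.cnorm D n (α + X.delta n γ)

/-- `α` is locally minimal: for every vertex `v` the induced cochain `α_v` is a
minimal cochain on the link `X_v` (a pure complex with facets of cardinality `D-1`). -/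
def LocallyMinimal (X : SComplex V) (D n : ℕ) (α : X.Cochain n) : Prop :=
  ∀ v : V, (X.link v).IsMinimal (D - 1) (n - 1) (X.localize v n α)

end SComplex

/-!
If `α` is not locally minimal, some `α_v` is shortened by a coboundary `δ g` in the link of `v`.
Coning `g` off at `v` gives a cochain `γ` supported on the star of `v`, and `α + δγ` agrees with
`α` off the star and localizes to `α_v + δ g` at `v`. The weight of `v ∪ ρ` in `X` is a fixed
positive multiple of the weight of `ρ` in the link, so the norm of `α` strictly drops. All norms
in degree `i` are integer multiples of `1 / (C(d+1,i+1) · |X(d)|)`, so the descent stops, while each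
cone has norm at most `D² / (C(d+1,i) · |X(d)|)`: every step costs at most a constant times the
drop in norm, and these drops add up to at most `‖α‖`.
-/

namespace SComplex

variable {V : Type} [DecidableEq V]

lemma mem_K {X : SComplex V} {n : ℕ} {σ : Finset V} :
    σ ∈ X.K n ↔ σ ∈ X.faces ∧ σ.card = n := Finset.mem_filter

lemma mem_link {X : SComplex V} {v : V} {σ : Finset V} :
    σ ∈ (X.link v).faces ↔ σ ∈ X.faces ∧ v ∉ σ ∧ insert v σ ∈ X.faces := Finset.mem_filter

lemma notMem_of_mem_link_K {X : SComplex V} {v : V} {n : ℕ} {ρ : Finset V}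
    (h : ρ ∈ (X.link v).K n) : v ∉ ρ :=
  (mem_link.mp (mem_K.mp h).1).2.1

lemma insert_mem_K {X : SComplex V} {v : V} {n : ℕ} {ρ : Finset V}
    (h : ρ ∈ (X.link v).K n) : insert v ρ ∈ X.K (n + 1) := by
  obtain ⟨hρ, rfl⟩ := mem_K.mp h
  exact mem_K.mpr ⟨(mem_link.mp hρ).2.2, Finset.card_insert_of_notMem (notMem_of_mem_link_K h)⟩

lemma erase_mem_link_K {X : SComplex V} {v : V} {n : ℕ} {τ : Finset V}
    (h : τ ∈ X.K (n + 1)) (hv : v ∈ τ) : τ.erase v ∈ (X.link v).K n := by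
  obtain ⟨hτ, hcard⟩ := mem_K.mp h
  refine mem_K.mpr ⟨mem_link.mpr ⟨X.down_closed τ hτ _ (Finset.erase_subset v τ),
    Finset.notMem_erase v τ, by rwa [Finset.insert_erase hv]⟩, ?_⟩
  rw [Finset.card_erase_of_mem hv, hcard, Nat.add_sub_cancel]

lemma sum_eq_sum_link_of_eq_zero_off_star {M : Type*} [AddCommMonoid M] (X : SComplex V) (v : V)
    (n : ℕ) (f : X.K (n + 1) → M) (hf : ∀ σ, v ∉ σ.1 → f σ = 0) :
    ∑ σ ∈ (X.K (n + 1)).attach, f σ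
      = ∑ ρ ∈ ((X.link v).K n).attach, f ⟨insert v ρ.1, insert_mem_K ρ.2⟩ := by
  rw [← Finset.sum_filter_of_ne (p := fun σ => v ∈ σ.1)
    fun σ _ h => by_contra fun hv => h (hf σ hv)]
  symm
  refine Finset.sum_bij' (fun ρ _ => ⟨insert v ρ.1, insert_mem_K ρ.2⟩)
    (fun σ hσ => ⟨σ.1.erase v, erase_mem_link_K σ.2 (Finset.mem_filter.mp hσ).2⟩)
    (fun ρ _ => Finset.mem_filter.mpr ⟨Finset.mem_attach _ _, Finset.mem_insert_self v ρ.1⟩)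
    (fun σ _ => Finset.mem_attach _ _)
    (fun ρ _ => Subtype.ext (Finset.erase_insert (notMem_of_mem_link_K ρ.2)))
    (fun σ hσ => Subtype.ext (Finset.insert_erase (Finset.mem_filter.mp hσ).2))
    (fun ρ _ => rfl)

lemma card_facets_insert_subset (X : SComplex V) (v : V) (D : ℕ) {ρ : Finset V} (hv : v ∉ ρ) :
    ((X.K (D + 1)).filter fun τ => insert v ρ ⊆ τ).card
      = (((X.link v).K D).filter fun τ => ρ ⊆ τ).card := by
  refine Finset.card_bij' (fun τ _ => τ.erase v) (fun τ _ => insert v τ) ?_ ?_ ?_ ?_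
  · intro τ hτ
    obtain ⟨hK, hsub⟩ := Finset.mem_filter.mp hτ
    rw [Finset.insert_subset_iff] at hsub
    refine Finset.mem_filter.mpr ⟨erase_mem_link_K hK hsub.1, fun x hx => ?_⟩
    exact Finset.mem_erase.mpr ⟨fun he => hv (he ▸ hx), hsub.2 hx⟩
  · intro τ hτ
    obtain ⟨hK, hsub⟩ := Finset.mem_filter.mp hτ
    exact Finset.mem_filter.mpr ⟨insert_mem_K hK, Finset.insert_subset_insert v hsub⟩
  · intro τ hτ
    exact Finset.insert_erase ((Finset.mem_filter.mp hτ).2 (Finset.mem_insert_self v ρ))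
  · intro τ hτ
    exact Finset.erase_insert (notMem_of_mem_link_K (Finset.mem_filter.mp hτ).1)

/-- The ratio of the weight of `v ∪ ρ` in `X` to the weight of `ρ` in the link of `v`. -/
noncomputable def linkScale (X : SComplex V) (v : V) (D m : ℕ) : ℝ :=
  (D.choose m : ℝ) * ((X.link v).K D).card / (((D + 1).choose (m + 1) : ℝ) * (X.K (D + 1)).card)

lemma linkScale_pos (X : SComplex V) (v : V) {D m : ℕ} (hm : m ≤ D)
    (hlink : 0 < ((X.link v).K D).card) : 0 < X.linkScale v D m := by
  obtain ⟨τ, hτ⟩ := Finset.card_pos.mp hlink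
  have hX : 0 < (X.K (D + 1)).card := Finset.card_pos.mpr ⟨_, insert_mem_K hτ⟩
  have := Nat.choose_pos hm
  have := Nat.choose_pos (Nat.succ_le_succ hm)
  unfold linkScale
  positivity

lemma wt_insert (X : SComplex V) (v : V) {D m : ℕ} (hm : m ≤ D)
    (hlink : 0 < ((X.link v).K D).card) {ρ : Finset V} (hv : v ∉ ρ) :
    X.wt (D + 1) (m + 1) (insert v ρ) = X.linkScale v D m * (X.link v).wt D m ρ := by
  have hB : (D.choose m : ℝ) * ((X.link v).K D).card ≠ 0 := by
    have := Nat.choose_pos hm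
    positivity
  rw [wt, wt, linkScale, card_facets_insert_subset X v D hv, div_mul_div_comm,
    mul_comm (_ * _) (_ : ℝ), mul_div_mul_right _ _ hB]

lemma localize_apply (X : SComplex V) (v : V) {n : ℕ} (β : X.Cochain (n + 1))
    (ρ : (X.link v).K n) :
    X.localize v (n + 1) β ρ = β ⟨insert v ρ.1, insert_mem_K ρ.2⟩ :=
  dif_pos (insert_mem_K ρ.2)

lemma localize_add (X : SComplex V) (v : V) {n : ℕ} (β β' : X.Cochain (n + 1)) :
    X.localize v (n + 1) (β + β') = X.localize v (n + 1) β + X.localize v (n + 1) β' := by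
  funext ρ
  simp only [Pi.add_apply, localize_apply]

lemma cnorm_sub_cnorm_eq_linkScale_mul (X : SComplex V) (v : V) {D m : ℕ} (hm : m ≤ D)
    (hlink : 0 < ((X.link v).K D).card) (β β' : X.Cochain (m + 1))
    (hoff : ∀ σ, v ∉ σ.1 → β σ = β' σ) :
    X.cnorm (D + 1) (m + 1) β' - X.cnorm (D + 1) (m + 1) β
      = X.linkScale v D m * ((X.link v).cnorm D m (X.localize v (m + 1) β')
          - (X.link v).cnorm D m (X.localize v (m + 1) β)) := by
  simp only [cnorm, ← Finset.sum_sub_distrib, Finset.mul_sum]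
  rw [sum_eq_sum_link_of_eq_zero_off_star X v m _ fun σ hv => by rw [hoff σ hv, sub_self]]
  refine Finset.sum_congr rfl fun ρ _ => ?_
  rw [localize_apply, localize_apply, wt_insert X v hm hlink (notMem_of_mem_link_K ρ.2)]
  split_ifs <;> ring

lemma delta_add (X : SComplex V) (n : ℕ) (γ γ' : X.Cochain (n - 1)) :
    X.delta n (γ + γ') = X.delta n γ + X.delta n γ' := by
  funext τ
  simp only [delta, Pi.add_apply, ← Finset.sum_add_distrib]
  exact Finset.sum_congr rfl fun σ _ => ite_add_zero

lemma delta_zero (X : SComplex V) (n : ℕ) : X.delta n 0 = 0 := by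
  funext τ
  simp [delta]

def cone (X : SComplex V) (v : V) (n : ℕ) (g : (X.link v).Cochain n) : X.Cochain (n + 1) :=
  fun σ => if h : v ∈ σ.1 then g ⟨σ.1.erase v, erase_mem_link_K σ.2 h⟩ else 0

lemma cone_apply_of_notMem (X : SComplex V) {v : V} {n : ℕ} (g : (X.link v).Cochain n)
    {σ : X.K (n + 1)} (hv : v ∉ σ.1) : X.cone v n g σ = 0 :=
  dif_neg hv

lemma cone_apply_insert (X : SComplex V) {v : V} {n : ℕ} (g : (X.link v).Cochain n)
    (ρ : (X.link v).K n) : X.cone v n g ⟨insert v ρ.1, insert_mem_K ρ.2⟩ = g ρ := by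
  rw [cone, dif_pos (Finset.mem_insert_self v ρ.1)]
  exact congrArg g (Subtype.ext (Finset.erase_insert (notMem_of_mem_link_K ρ.2)))

lemma delta_cone_apply_of_notMem (X : SComplex V) {v : V} {n : ℕ} (g : (X.link v).Cochain n)
    {τ : X.K (n + 2)} (hv : v ∉ τ.1) : X.delta (n + 2) (X.cone v n g) τ = 0 :=
  Finset.sum_eq_zero fun σ _ => by
    split_ifs with hσ
    · exact X.cone_apply_of_notMem g fun h => hv (hσ h)
    · rfl

lemma localize_delta_cone (X : SComplex V) (v : V) (n : ℕ) (g : (X.link v).Cochain n) :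
    X.localize v (n + 2) (X.delta (n + 2) (X.cone v n g)) = (X.link v).delta (n + 1) g := by
  funext ρ
  rw [localize_apply]
  refine (X.sum_eq_sum_link_of_eq_zero_off_star v n _ fun σ hv => ?_).trans
    (Finset.sum_congr rfl fun w _ => ?_)
  · split_ifs
    · exact X.cone_apply_of_notMem g hv
    · rfl
  · simp only [Finset.insert_subset_insert_iff (notMem_of_mem_link_K w.2), cone_apply_insert]

lemma wt_nonneg (X : SComplex V) (D n : ℕ) (σ : Finset V) : 0 ≤ X.wt D n σ := by
  unfold wt
  positivity

lemma cnorm_nonneg (X : SComplex V) (D n : ℕ) (α : X.Cochain n) : 0 ≤ X.cnorm D n α :=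
  Finset.sum_nonneg fun σ _ => by
    split_ifs
    exacts [X.wt_nonneg D n σ, le_rfl]

lemma cnorm_zero (X : SComplex V) (D n : ℕ) : X.cnorm D n 0 = 0 := by
  simp [cnorm]

lemma cnorm_add_le (X : SComplex V) (D n : ℕ) (α β : X.Cochain n) :
    X.cnorm D n (α + β) ≤ X.cnorm D n α + X.cnorm D n β := by
  rw [cnorm, cnorm, cnorm, ← Finset.sum_add_distrib]
  refine Finset.sum_le_sum fun σ _ => ?_
  have hw := X.wt_nonneg D n σ.1
  have hsupp : (α + β) σ ≠ 0 → α σ ≠ 0 ∨ β σ ≠ 0 := by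
    contrapose!
    rintro ⟨ha, hb⟩
    simp [ha, hb]
  split_ifs <;> simp_all

noncomputable def cnormNum (X : SComplex V) (D n : ℕ) (α : X.Cochain n) : ℕ :=
  ∑ σ ∈ (X.K n).attach, if α σ ≠ 0 then ((X.K D).filter fun τ => σ.1 ⊆ τ).card else 0

lemma cnorm_eq_cnormNum_div (X : SComplex V) (D n : ℕ) (α : X.Cochain n) :
    X.cnorm D n α = X.cnormNum D n α / ((D.choose n : ℝ) * (X.K D).card) := by
  rw [cnorm, cnormNum, Nat.cast_sum, Finset.sum_div]
  refine Finset.sum_congr rfl fun σ _ => ?_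
  split_ifs <;> simp [wt]

lemma cnormNum_lt_of_cnorm_lt {X : SComplex V} {D n : ℕ} {α β : X.Cochain n}
    (h : X.cnorm D n β < X.cnorm D n α) : X.cnormNum D n β < X.cnormNum D n α := by
  rw [cnorm_eq_cnormNum_div, cnorm_eq_cnormNum_div] at h
  by_contra! hle
  exact h.not_ge (div_le_div_of_nonneg_right (by exact_mod_cast hle) (by positivity))

lemma inv_le_cnorm_sub_of_lt {X : SComplex V} {D n : ℕ} {α β : X.Cochain n}
    (h : X.cnorm D n β < X.cnorm D n α) :
    ((D.choose n : ℝ) * (X.K D).card)⁻¹ ≤ X.cnorm D n α - X.cnorm D n β := by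
  have hnum : (X.cnormNum D n β : ℝ) + 1 ≤ X.cnormNum D n α := by
    exact_mod_cast cnormNum_lt_of_cnorm_lt h
  rw [cnorm_eq_cnormNum_div, cnorm_eq_cnormNum_div] at h ⊢
  rcases (by positivity : (0 : ℝ) ≤ (D.choose n : ℝ) * (X.K D).card).eq_or_lt with hden | hden
  · simp [← hden] at h
  · rw [← sub_div, inv_eq_one_div]
    exact div_le_div_of_nonneg_right (by linarith) hden.le

lemma card_K_pos_of_cnorm_pos {X : SComplex V} {D n : ℕ} {α : X.Cochain n}
    (h : 0 < X.cnorm D n α) : 0 < (X.K D).card := by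
  refine Nat.pos_of_ne_zero fun h0 => ?_
  rw [cnorm_eq_cnormNum_div, h0] at h
  simp at h

lemma wt_le_of_mem (X : SComplex V) {D n D₀ : ℕ} {v : V}
    (hdeg : (X.faces.filter fun τ => v ∈ τ).card ≤ D₀) {σ : Finset V} (hv : v ∈ σ) :
    X.wt D n σ ≤ D₀ / ((D.choose n : ℝ) * (X.K D).card) := by
  refine div_le_div_of_nonneg_right ?_ (by positivity)
  refine le_trans (Nat.cast_le.mpr (Finset.card_le_card fun τ hτ => ?_)) (Nat.cast_le.mpr hdeg)
  obtain ⟨hK, hsub⟩ := Finset.mem_filter.mp hτ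
  exact Finset.mem_filter.mpr ⟨(mem_K.mp hK).1, hsub hv⟩

lemma cnorm_le_of_eq_zero_off_star (X : SComplex V) {D n D₀ : ℕ} {v : V}
    (hdeg : (X.faces.filter fun τ => v ∈ τ).card ≤ D₀) (γ : X.Cochain n)
    (hγ : ∀ σ, v ∉ σ.1 → γ σ = 0) :
    X.cnorm D n γ ≤ D₀ * (D₀ / ((D.choose n : ℝ) * (X.K D).card)) := by
  set b : ℝ := D₀ / ((D.choose n : ℝ) * (X.K D).card)
  have hstar : ((X.K n).attach.filter fun σ => v ∈ σ.1).card ≤ D₀ :=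
    (Finset.card_le_card_of_injOn Subtype.val
      (fun σ hσ => Finset.mem_filter.mpr ⟨(mem_K.mp σ.2).1, (Finset.mem_filter.mp hσ).2⟩)
      Subtype.val_injective.injOn).trans hdeg
  calc X.cnorm D n γ ≤ ∑ σ ∈ (X.K n).attach, if v ∈ σ.1 then b else 0 :=
        Finset.sum_le_sum fun σ _ => by
          by_cases hv : v ∈ σ.1
          · rw [if_pos hv]
            split_ifs
            exacts [X.wt_le_of_mem hdeg hv, by positivity]
          · rw [if_neg (not_not.mpr (hγ σ hv)), if_neg hv]
    _ = ((X.K n).attach.filter fun σ => v ∈ σ.1).card * b := by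
        rw [← Finset.sum_filter, Finset.sum_const, nsmul_eq_mul]
    _ ≤ D₀ * b := by gcongr

lemma exists_cnorm_add_delta_cone_lt (X : SComplex V) (v : V) {d j : ℕ} (hj : j + 1 ≤ d)
    (α : X.Cochain (j + 2))
    (hα : ¬ (X.link v).IsMinimal d (j + 1) (X.localize v (j + 2) α)) :
    ∃ g : (X.link v).Cochain j,
      X.cnorm (d + 1) (j + 2) (α + X.delta (j + 2) (X.cone v j g)) < X.cnorm (d + 1) (j + 2) α := by
  obtain ⟨g, hg⟩ : ∃ g : (X.link v).Cochain j, ¬ _ := not_forall.mp hα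
  rw [not_le] at hg
  have hlink : 0 < ((X.link v).K d).card :=
    card_K_pos_of_cnorm_pos (((X.link v).cnorm_nonneg _ _ _).trans_lt hg)
  refine ⟨g, sub_neg.mp ?_⟩
  rw [X.cnorm_sub_cnorm_eq_linkScale_mul v hj hlink α _ fun σ hv => by
      rw [Pi.add_apply, X.delta_cone_apply_of_notMem g hv, add_zero],
    localize_add, localize_delta_cone]
  exact mul_neg_of_pos_of_neg (X.linkScale_pos v hj hlink) (sub_neg.mpr hg)

/-- The ratio of the cone bound `D² / (C(d+1,j+1) · |X(d)|)` to the norm quantum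
`1 / (C(d+1,j+2) · |X(d)|)`. -/
noncomputable def descentConst (d j D : ℕ) : ℝ :=
  (D : ℝ) ^ 2 * ((d + 1).choose (j + 2) : ℝ) / ((d + 1).choose (j + 1) : ℝ)

lemma descentConst_nonneg (d j D : ℕ) : 0 ≤ descentConst d j D := by
  unfold descentConst
  positivity

lemma exists_descent_step (X : SComplex V) {d j D : ℕ} (hj : j + 1 ≤ d)
    (hdeg : ∀ v : V, (X.faces.filter fun σ => v ∈ σ).card ≤ D) (α : X.Cochain (j + 2))
    (hα : ¬ X.LocallyMinimal (d + 1) (j + 2) α) :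
    ∃ γ : X.Cochain (j + 1),
      X.cnorm (d + 1) (j + 2) (α + X.delta (j + 2) γ) < X.cnorm (d + 1) (j + 2) α ∧
      X.cnorm (d + 1) (j + 1) γ ≤ descentConst d j D *
        (X.cnorm (d + 1) (j + 2) α - X.cnorm (d + 1) (j + 2) (α + X.delta (j + 2) γ)) := by
  obtain ⟨v, hv⟩ := not_forall.mp hα
  obtain ⟨g, hlt⟩ := X.exists_cnorm_add_delta_cone_lt v hj α hv
  refine ⟨X.cone v j g, hlt, ?_⟩
  have hC : ((d + 1).choose (j + 1) : ℝ) ≠ 0 := by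
    exact_mod_cast (Nat.choose_pos (by omega)).ne'
  have hC' : ((d + 1).choose (j + 2) : ℝ) ≠ 0 := by
    exact_mod_cast (Nat.choose_pos (by omega)).ne'
  calc X.cnorm (d + 1) (j + 1) (X.cone v j g)
      ≤ D * (D / (((d + 1).choose (j + 1) : ℝ) * (X.K (d + 1)).card)) :=
        X.cnorm_le_of_eq_zero_off_star (hdeg v) _ fun σ hσ => X.cone_apply_of_notMem g hσ
    _ = descentConst d j D * (((d + 1).choose (j + 2) : ℝ) * (X.K (d + 1)).card)⁻¹ := by
        rw [descentConst, mul_inv]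
        field_simp
    _ ≤ _ := mul_le_mul_of_nonneg_left (inv_le_cnorm_sub_of_lt hlt) (descentConst_nonneg d j D)

theorem exists_locallyMinimal_sub_eq_delta (X : SComplex V) {d j D : ℕ} (hj : j + 1 ≤ d)
    (hdeg : ∀ v : V, (X.faces.filter fun σ => v ∈ σ).card ≤ D) (α : X.Cochain (j + 2)) :
    ∃ (αt : X.Cochain (j + 2)) (γ : X.Cochain (j + 1)),
      X.LocallyMinimal (d + 1) (j + 2) αt ∧
      X.cnorm (d + 1) (j + 2) αt ≤ X.cnorm (d + 1) (j + 2) α ∧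
      α - αt = X.delta (j + 2) γ ∧
      X.cnorm (d + 1) (j + 1) γ ≤
        descentConst d j D * (X.cnorm (d + 1) (j + 2) α - X.cnorm (d + 1) (j + 2) αt) := by
  induction hN : X.cnormNum (d + 1) (j + 2) α using Nat.strong_induction_on generalizing α with
  | _ N ih =>
  by_cases hα : X.LocallyMinimal (d + 1) (j + 2) α
  · exact ⟨α, 0, hα, le_rfl, by rw [sub_self, delta_zero], by simp [cnorm_zero]⟩
  obtain ⟨γ₁, hlt, hγ₁⟩ := X.exists_descent_step hj hdeg α hα
  obtain ⟨αt, γ₂, hmin, hle, hsub, hγ₂⟩ := ih _ (hN ▸ cnormNum_lt_of_cnorm_lt hlt) _ rfl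
  refine ⟨αt, γ₁ + γ₂, hmin, hle.trans hlt.le, ?_, ?_⟩
  · rw [delta_add, ← hsub]
    linear_combination -ZModModule.add_self (X.delta (j + 2) γ₁)
  · calc X.cnorm (d + 1) (j + 1) (γ₁ + γ₂)
        ≤ X.cnorm (d + 1) (j + 1) γ₁ + X.cnorm (d + 1) (j + 1) γ₂ := X.cnorm_add_le _ _ _ _
      _ ≤ _ := by linarith [add_le_add hγ₁ hγ₂]

end SComplex

theorem exists_locally_minimal_representative_general
    (d i D : ℕ) (hi1 : 1 ≤ i) (hid : i ≤ d) :
    ∃ c : ℝ, ∀ (V : Type) [Fintype V] [DecidableEq V] (X : SComplex V),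
      X.IsPure (d + 1) →
      (∀ v : V, (X.faces.filter fun σ => v ∈ σ).card ≤ D) →
      ∀ α : X.Cochain (i + 1),
        ∃ (αt : X.Cochain (i + 1)) (γ : X.Cochain i),
          X.LocallyMinimal (d + 1) (i + 1) αt ∧
          X.cnorm (d + 1) (i + 1) αt ≤ X.cnorm (d + 1) (i + 1) α ∧
          α - αt = X.delta (i + 1) γ ∧
          X.cnorm (d + 1) i γ ≤ c * X.cnorm (d + 1) (i + 1) α := by
  obtain ⟨j, rfl⟩ : ∃ j, i = j + 1 := ⟨i - 1, by omega⟩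
  refine ⟨SComplex.descentConst d j D, fun V _ _ X _ hdeg α => ?_⟩
  obtain ⟨αt, γ, hmin, hle, hsub, hγ⟩ := X.exists_locallyMinimal_sub_eq_delta hid hdeg α
  refine ⟨αt, γ, hmin, hle, hsub, hγ.trans ?_⟩
  exact mul_le_mul_of_nonneg_left (sub_le_self _ (X.cnorm_nonneg _ _ _))
    (SComplex.descentConst_nonneg d j D)

/-- Let `d ≥ 1`, `1 ≤ i ≤ d`, `D ∈ ℕ`.  There is a constant `c = c(d,i,D)`
such that for every finite pure `d`-dimensional simplicial complex `X` in which every vertex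
lies in at most `D` faces, and every `α ∈ C^i(X,F₂)`, there are a locally minimal
`α̃ ∈ α + B^i(X,F₂)` with `‖α̃‖ ≤ ‖α‖` and `γ ∈ C^{i-1}(X,F₂)` with `α − α̃ = δ_{i-1} γ`
and `‖γ‖ ≤ c·‖α‖`. -/
theorem exists_locally_minimal_representative
    (d i D : ℕ) (hd : 1 ≤ d) (hi1 : 1 ≤ i) (hid : i ≤ d) :
    ∃ c : ℝ, ∀ (V : Type) [Fintype V] [DecidableEq V] (X : SComplex V),
      X.IsPure (d + 1) →
      (∀ v : V, (X.faces.filter fun σ => v ∈ σ).card ≤ D) →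
      ∀ α : X.Cochain (i + 1),
        ∃ (αt : X.Cochain (i + 1)) (γ : X.Cochain i),
          X.LocallyMinimal (d + 1) (i + 1) αt ∧
          X.cnorm (d + 1) (i + 1) αt ≤ X.cnorm (d + 1) (i + 1) α ∧
          α - αt = X.delta (i + 1) γ ∧
          X.cnorm (d + 1) i γ ≤ c * X.cnorm (d + 1) (i + 1) α :=
  exists_locally_minimal_representative_general d i D hi1 hid
end

section
/- Σ_{v ∈ Y(0)} |E_{Y_v}(α_v, ᾱ_v)| = 2·t_1 + 2·t_2, where the sum is over all vertices of Y. -/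
open scoped Classical

/-- `t_i`: the number of triangles of `Y` containing exactly `i` edges of `α`. -/
def tcount {V : Type} [Fintype V] [DecidableEq V] (Y : SComplex V)
    (α : Finset (Finset V)) (i : ℕ) : ℕ :=
  ((Y.K 3).filter fun τ => (α.filter fun e => e ⊆ τ).card = i).card

/-- `α_v`: the set of edges of `α` containing the vertex `v`. -/
def alphaV {V : Type} [Fintype V] [DecidableEq V]
    (α : Finset (Finset V)) (v : V) : Finset (Finset V) :=
  α.filter fun e => v ∈ e

/-- The number of edges of the link graph `Y_v` (vertices: edges of `Y` containing `v`,
adjacent iff they span a triangle) with exactly one endpoint in `α_v`, counted as ordered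
pairs `(e,f)` with `e ∈ α`, `f ∉ α`. -/
def linkCut {V : Type} [Fintype V] [DecidableEq V] (Y : SComplex V)
    (α : Finset (Finset V)) (v : V) : ℕ :=
  (((Y.K 2) ×ˢ (Y.K 2)).filter fun p =>
    v ∈ p.1 ∧ v ∈ p.2 ∧ (p.1 ∪ p.2) ∈ Y.K 3 ∧ p.1 ∈ α ∧ p.2 ∉ α).card

/-- `Σ_{v ∈ Y(0)} |E_{Y_v}(α_v, ᾱ_v)| = 2t₁ + 2t₂`. -/
theorem sum_link_cuts_eq
    {V : Type} [Fintype V] [DecidableEq V]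
    (Y : SComplex V) (hpure : Y.IsPure 3)
    (α : Finset (Finset V)) (hα : α ⊆ Y.K 2) :
    ∑ v : V, linkCut Y α v = 2 * tcount Y α 1 + 2 * tcount Y α 2 := by
  classical
  set S := (((Y.K 2) ×ˢ (Y.K 2)).filter fun p =>
    (p.1 ∪ p.2) ∈ Y.K 3 ∧ p.1 ∈ α ∧ p.2 ∉ α) with hS
  set k : Finset V → ℕ := fun τ => (α.filter fun e => e ⊆ τ).card with hk
  have h1 : ∑ v : V, linkCut Y α v = S.card := by
    unfold linkCut
    rw [hS]
    simp only [Finset.card_filter]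
    rw [Finset.sum_comm]
    refine Finset.sum_congr rfl fun p hp => ?_
    obtain ⟨hp1, hp2⟩ := Finset.mem_product.mp hp
    by_cases hR : (p.1 ∪ p.2) ∈ Y.K 3 ∧ p.1 ∈ α ∧ p.2 ∉ α
    · have hcap : (p.1 ∩ p.2).card = 1 := by
        have hu := Finset.card_union_add_card_inter p.1 p.2
        have h3 : (p.1 ∪ p.2).card = 3 := (Finset.mem_filter.mp hR.1).2
        have c1 : p.1.card = 2 := (Finset.mem_filter.mp hp1).2
        have c2 : p.2.card = 2 := (Finset.mem_filter.mp hp2).2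
        omega
      simp only [hR, and_true, if_true, hR.1, hR.2.1, hR.2.2, not_false_iff]
      have hsum : (∑ x : V, if x ∈ p.1 ∧ x ∈ p.2 then (1:ℕ) else 0)
          = (p.1 ∩ p.2).card := by
        rw [Finset.sum_boole]
        norm_cast
        congr 1
        ext x
        simp
      rw [hsum, hcap]
    · simp only [hR, if_false]
      rw [Finset.sum_eq_zero]
      intro v _
      rw [if_neg]
      tauto
  have h2 : S.card = ∑ τ ∈ Y.K 3, (S.filter fun p => p.1 ∪ p.2 = τ).card := by
    apply Finset.card_eq_sum_card_fiberwise
    intro p hp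
    exact (Finset.mem_filter.mp hp).2.1
  have hkle : ∀ τ ∈ Y.K 3, k τ ≤ 3 := by
    intro τ hτ
    have hτ3 : τ.card = 3 := (Finset.mem_filter.mp hτ).2
    have hsub : (α.filter fun e => e ⊆ τ) ⊆ τ.powersetCard 2 := by
      intro e he
      obtain ⟨heα, heτ⟩ := Finset.mem_filter.mp he
      exact Finset.mem_powersetCard.mpr ⟨heτ, (Finset.mem_filter.mp (hα heα)).2⟩
    calc k τ ≤ (τ.powersetCard 2).card := Finset.card_le_card hsub
      _ = 3 := by rw [Finset.card_powersetCard, hτ3]; decide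
  have h3 : ∀ τ ∈ Y.K 3, (S.filter fun p => p.1 ∪ p.2 = τ).card = k τ * (3 - k τ) := by
    intro τ hτ
    have hτf : τ ∈ Y.faces := (Finset.mem_filter.mp hτ).1
    have hτ3 : τ.card = 3 := (Finset.mem_filter.mp hτ).2
    have hset : (S.filter fun p => p.1 ∪ p.2 = τ) =
        (α.filter fun e => e ⊆ τ) ×ˢ ((τ.powersetCard 2).filter fun f => f ∉ α) := by
      ext p
      simp only [Finset.mem_filter, Finset.mem_product, hS, Finset.mem_powersetCard]
      constructor
      · rintro ⟨⟨⟨hp1, hp2⟩, hK3, h1α, h2α⟩, huni⟩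
        refine ⟨⟨h1α, ?_⟩, ⟨⟨?_, (Finset.mem_filter.mp hp2).2⟩, h2α⟩⟩
        · rw [← huni]; exact Finset.subset_union_left
        · rw [← huni]; exact Finset.subset_union_right
      · rintro ⟨⟨h1α, h1τ⟩, ⟨⟨h2τ, h2c⟩, h2α⟩⟩
        have hp1 : p.1 ∈ Y.K 2 := hα h1α
        have hp2 : p.2 ∈ Y.K 2 := by
          refine Finset.mem_filter.mpr ⟨Y.down_closed τ hτf p.2 h2τ, h2c⟩
        have c1 : p.1.card = 2 := (Finset.mem_filter.mp hp1).2
        have hne : p.1 ≠ p.2 := fun h => h2α (h ▸ h1α)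
        have huni : p.1 ∪ p.2 = τ := by
          apply Finset.eq_of_subset_of_card_le (Finset.union_subset h1τ h2τ)
          have hu := Finset.card_union_add_card_inter p.1 p.2
          have hint : (p.1 ∩ p.2).card ≤ 1 := by
            by_contra h
            push_neg at h
            have : p.1 ∩ p.2 = p.1 :=
              Finset.eq_of_subset_of_card_le Finset.inter_subset_left (by omega)
            have : p.1 ⊆ p.2 := by rw [← this]; exact Finset.inter_subset_right
            exact hne (Finset.eq_of_subset_of_card_le this (by omega))
          omega
        exact ⟨⟨⟨hp1, hp2⟩, huni ▸ hτ, h1α, h2α⟩, huni⟩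
    rw [hset, Finset.card_product]
    have hpow : (τ.powersetCard 2).card = 3 := by
      rw [Finset.card_powersetCard, hτ3]; decide
    have heq : (τ.powersetCard 2).filter (fun f => f ∈ α) = α.filter fun e => e ⊆ τ := by
      ext e
      simp only [Finset.mem_filter, Finset.mem_powersetCard]
      constructor
      · rintro ⟨⟨h1, h2⟩, h3⟩; exact ⟨h3, h1⟩
      · rintro ⟨h1, h2⟩; exact ⟨⟨h2, (Finset.mem_filter.mp (hα h1)).2⟩, h1⟩
    have hcards : ((τ.powersetCard 2).filter fun f => f ∈ α).card = k τ := by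
      rw [heq]
    have hadd : ((τ.powersetCard 2).filter fun f => f ∈ α).card +
        ((τ.powersetCard 2).filter fun f => f ∉ α).card = (τ.powersetCard 2).card := by
      exact Finset.card_filter_add_card_filter_not _
    have hkrfl : (Finset.filter (fun e => e ⊆ τ) α).card = k τ := rfl
    have hB : ((τ.powersetCard 2).filter fun f => f ∉ α).card = 3 - k τ := by omega
    rw [hkrfl, hB]
  rw [h1, h2, Finset.sum_congr rfl h3]
  have hsplit : ∀ τ ∈ Y.K 3, k τ * (3 - k τ) =
      2 * (if k τ = 1 then 1 else 0) + 2 * (if k τ = 2 then 1 else 0) := by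
    intro τ hτ
    have := hkle τ hτ
    interval_cases h : k τ <;> simp
  rw [Finset.sum_congr rfl hsplit, Finset.sum_add_distrib, ← Finset.mul_sum, ← Finset.mul_sum]
  unfold tcount
  rw [Finset.card_filter, Finset.card_filter]
end

section
/- Let q ≥ 2 and let G be a finite connected bipartite (q+1)-regular graph on Q vertices whose adjacency-matrix eigenvalues other than ±(q+1) all have absolute value at most √q. Then for every subset A of the vertices of G with |A| ≤ Q/2: |E(A,Ā)| ≥ (1/2)·(q+1−√q)·|A|. -/
/-!
Let `x` be the indicator vector of `A` and `y = x - (|A|/Q)·𝟙` its projection orthogonal to the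
constants. The edge boundary of `A` is the Laplacian quadratic form `xᵀ L x`, which is unchanged
by adding constants, so it equals `yᵀ L y = (q+1)‖y‖² - yᵀ M y` for the adjacency matrix `M`.
By connectivity the eigenvectors of `M` for the eigenvalue `q+1` are constant, hence orthogonal
to `y`, and every other eigenvalue is at most `√q`; expanding `y` in an orthonormal eigenbasis
gives `yᵀ M y ≤ √q ‖y‖²`. Since `‖y‖² = |A| (1 - |A|/Q) ≥ |A|/2`, the bound follows.
-/

open Matrix Finset

theorem Matrix.IsHermitian.dotProduct_mulVec_le {n : Type*} [Fintype n] {A : Matrix n n ℝ}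
    (hA : A.IsHermitian) {r : ℝ} {y : n → ℝ}
    (h : ∀ (μ : ℝ) (f : n → ℝ), f ≠ 0 → A *ᵥ f = μ • f → f ⬝ᵥ y ≠ 0 → μ ≤ r) :
    y ⬝ᵥ A *ᵥ y ≤ r * (y ⬝ᵥ y) := by
  classical
  set B := hA.eigenvectorBasis
  set c : n → ℝ := fun i => ⇑(B i) ⬝ᵥ y
  have parseval (x : n → ℝ) : y ⬝ᵥ x = ∑ i, c i * (⇑(B i) ⬝ᵥ x) := by
    simpa [c, EuclideanSpace.inner_eq_star_dotProduct, dotProduct_comm] using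
      (B.sum_inner_mul_inner (WithLp.toLp 2 y) (WithLp.toLp 2 x)).symm
  have hA_symm : A.IsSymm := by simpa using hA
  have hBA (i : n) : ⇑(B i) ⬝ᵥ A *ᵥ y = hA.eigenvalues i * c i := by
    rw [dotProduct_mulVec, ← mulVec_transpose, hA_symm, hA.mulVec_eigenvectorBasis,
      smul_dotProduct, smul_eq_mul]
  rw [parseval, parseval, mul_sum]
  refine sum_le_sum fun i _ => ?_
  rw [hBA]
  by_cases hc : c i = 0
  · simp [hc]
  have hBi : ⇑(B i) ≠ 0 := by simpa using B.orthonormal.ne_zero i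
  have := h _ _ hBi (hA.mulVec_eigenvectorBasis i) hc
  nlinarith [mul_self_nonneg (c i)]

namespace SimpleGraph

variable {V : Type*} [Fintype V] {G : SimpleGraph V} [DecidableRel G.Adj]

theorem IsRegularOfDegree.lapMatrix_mulVec [DecidableEq V] {R : Type*} [Ring R] {d : ℕ}
    (hreg : G.IsRegularOfDegree d) (f : V → R) :
    G.lapMatrix R *ᵥ f = (d : R) • f - G.adjMatrix R *ᵥ f := by
  ext v
  simp [lapMatrix, sub_mulVec, degMatrix_mulVec_apply, hreg v]

theorem Connected.eq_of_adjMatrix_mulVec_eq_smul (hconn : G.Connected) {d : ℕ}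
    (hreg : G.IsRegularOfDegree d) {f : V → ℝ} (hf : G.adjMatrix ℝ *ᵥ f = (d : ℝ) • f)
    (u w : V) : f u = f w := by
  classical
  exact (lapMatrix_mulVec_eq_zero_iff_forall_reachable G).mp
    (by rw [hreg.lapMatrix_mulVec, hf, sub_self]) u w (hconn u w)

theorem Connected.dotProduct_adjMatrix_mulVec_le (hconn : G.Connected) {d : ℕ}
    (hreg : G.IsRegularOfDegree d) {r : ℝ}
    (hspec : ∀ μ : ℝ, (∃ f : V → ℝ, f ≠ 0 ∧ G.adjMatrix ℝ *ᵥ f = μ • f) → μ ≠ d → μ ≤ r)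
    {y : V → ℝ} (hy : ∑ v, y v = 0) : y ⬝ᵥ G.adjMatrix ℝ *ᵥ y ≤ r * (y ⬝ᵥ y) := by
  refine (isHermitian_adjMatrix ℝ G).dotProduct_mulVec_le
    fun μ f hf0 hf hfy => hspec μ ⟨f, hf0, hf⟩ ?_
  rintro rfl
  obtain ⟨v⟩ := hconn.nonempty
  have hconst : f = fun _ => f v :=
    funext fun u => hconn.eq_of_adjMatrix_mulVec_eq_smul hreg hf u v
  exact hfy (by rw [hconst]; simp [dotProduct, ← mul_sum, hy])

theorem dotProduct_lapMatrix_mulVec_sub_const [DecidableEq V] {R : Type*} [Field R] [CharZero R]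
    (x : V → R) (c : R) :
    (x - fun _ => c) ⬝ᵥ G.lapMatrix R *ᵥ (x - fun _ => c) = x ⬝ᵥ G.lapMatrix R *ᵥ x := by
  simp only [← toLinearMap₂'_apply', lapMatrix_toLinearMap₂', Pi.sub_apply,
    sub_sub_sub_cancel_right]

theorem card_interedges_compl_eq_dotProduct_lapMatrix [DecidableEq V] (s : Finset V) :
    (#(G.interedges s sᶜ) : ℝ) =
      (s : Set V).indicator 1 ⬝ᵥ G.lapMatrix ℝ *ᵥ (s : Set V).indicator 1 := by
  have hLx (i : V) (hi : i ∈ s) :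
      (G.lapMatrix ℝ *ᵥ (s : Set V).indicator 1) i = #(G.neighborFinset i \ s) := by
    rw [lapMatrix_mulVec_apply, ← card_neighborFinset_eq_degree,
      ← card_sdiff_add_card_inter (G.neighborFinset i) s, Set.indicator_of_mem (mem_coe.2 hi)]
    simp only [Set.indicator_apply, mem_coe, Pi.one_apply, sum_boole, filter_mem_eq_inter]
    push_cast
    ring
  simp only [dotProduct, Set.indicator_apply, mem_coe, Pi.one_apply, ite_mul, one_mul, zero_mul,
    sum_ite_mem, univ_inter]
  rw [sum_congr rfl hLx, interedges, Rel.interedges, card_filter, sum_product]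
  push_cast
  refine sum_congr rfl fun i _ => ?_
  rw [sum_boole]
  congr 2
  ext
  simp [and_comm]

open Classical in
theorem card_filter_edgeFinset_eq_card_interedges [DecidableEq V] (s : Finset V) :
    #{e ∈ G.edgeFinset | ∃ u ∈ e, ∃ w ∈ e, u ∈ s ∧ w ∉ s} = #(G.interedges s sᶜ) := by
  symm
  refine card_bij (fun p _ => s(p.1, p.2)) ?_ ?_ ?_
  · rintro ⟨u, w⟩ h
    rw [mem_interedges_iff, mem_compl] at h
    simp only [mem_filter, mem_edgeFinset, mem_edgeSet, Sym2.mem_iff]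
    exact ⟨h.2.2, u, .inl rfl, w, .inr rfl, h.1, h.2.1⟩
  · rintro ⟨u, w⟩ h ⟨u', w'⟩ h' he
    rw [mem_interedges_iff, mem_compl] at h h'
    rcases Sym2.eq_iff.mp he with ⟨rfl, rfl⟩ | ⟨rfl, rfl⟩
    · rfl
    · exact absurd h.1 h'.2.1
  · intro e he
    simp only [mem_filter, mem_edgeFinset] at he
    obtain ⟨he, u, hu, w, hw, hus, hws⟩ := he
    obtain rfl : e = s(u, w) :=
      (Sym2.mem_and_mem_iff (ne_of_mem_of_not_mem hus hws)).mp ⟨hu, hw⟩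
    exact ⟨(u, w), by simpa [mem_interedges_iff, hus, hws] using he, rfl⟩

theorem Connected.le_card_interedges_compl [DecidableEq V] (hconn : G.Connected) {d : ℕ}
    (hreg : G.IsRegularOfDegree d) {r : ℝ}
    (hspec : ∀ μ : ℝ, (∃ f : V → ℝ, f ≠ 0 ∧ G.adjMatrix ℝ *ᵥ f = μ • f) → μ ≠ d → μ ≤ r)
    (s : Finset V) :
    ((d : ℝ) - r) * #s * (1 - #s / Fintype.card V) ≤ #(G.interedges s sᶜ) := by
  set x : V → ℝ := (s : Set V).indicator 1
  set t : ℝ := #s / Fintype.card V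
  set y : V → ℝ := x - fun _ => t
  have hV : (Fintype.card V : ℝ) ≠ 0 := by
    have := hconn.nonempty
    positivity
  have hsum : ∑ v, y v = 0 := by
    simp [y, x, t, sum_sub_distrib, Set.indicator_apply, mul_div_cancel₀ _ hV]
  have hyy : y ⬝ᵥ y = #s * (1 - t) := by
    calc y ⬝ᵥ y = y ⬝ᵥ x := by
          rw [dotProduct_sub _ x]
          simp [dotProduct, ← sum_mul, hsum]
      _ = #s * (1 - t) := by
          simp [dotProduct, y, x, Set.indicator_apply, mul_one_sub]
  calc ((d : ℝ) - r) * #s * (1 - t) = d * (y ⬝ᵥ y) - r * (y ⬝ᵥ y) := by rw [hyy]; ring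
    _ ≤ d * (y ⬝ᵥ y) - y ⬝ᵥ G.adjMatrix ℝ *ᵥ y := by
      linarith [hconn.dotProduct_adjMatrix_mulVec_le hreg hspec hsum]
    _ = y ⬝ᵥ G.lapMatrix ℝ *ᵥ y := by
      rw [hreg.lapMatrix_mulVec, dotProduct_sub _ (_ • _), dotProduct_smul, smul_eq_mul]
    _ = #(G.interedges s sᶜ) := by
      rw [dotProduct_lapMatrix_mulVec_sub_const, card_interedges_compl_eq_dotProduct_lapMatrix]

end SimpleGraph

open scoped Classical

theorem bipartite_expander_edge_boundary_general
    {V : Type} [Fintype V] [DecidableEq V] (q Q : ℕ)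
    (G : SimpleGraph V) (hconn : G.Connected) (hcard : Fintype.card V = Q)
    (hreg : ∀ v : V, G.degree v = q + 1)
    (heig : ∀ mu : ℝ, (∃ f : V → ℝ, f ≠ 0 ∧ G.adjMatrix ℝ *ᵥ f = mu • f) →
      mu = (q : ℝ) + 1 ∨ mu = -((q : ℝ) + 1) ∨ |mu| ≤ Real.sqrt q)
    (A : Finset V) (hA : (A.card : ℝ) ≤ (Q : ℝ) / 2) :
    ((G.edgeFinset.filter fun e => ∃ u ∈ e, ∃ w ∈ e, u ∈ A ∧ w ∉ A).card : ℝ) ≥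
      (1 / 2) * ((q : ℝ) + 1 - Real.sqrt q) * (A.card : ℝ) := by
  have hsqrt : Real.sqrt q ≤ q + 1 :=
    Real.sqrt_le_iff.2 ⟨by positivity, by nlinarith⟩
  have hspec (μ : ℝ) (hμ : ∃ f : V → ℝ, f ≠ 0 ∧ G.adjMatrix ℝ *ᵥ f = μ • f)
      (hne : μ ≠ ((q + 1 : ℕ) : ℝ)) : μ ≤ Real.sqrt q := by
    push_cast at hne
    rcases heig μ hμ with h | h | h
    · exact absurd h hne
    · linarith [Real.sqrt_nonneg q]
    · exact le_of_abs_le h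
  have hexpand := hconn.le_card_interedges_compl hreg hspec A
  have hhalf : (A.card : ℝ) / Fintype.card V ≤ 1 / 2 := by
    have := hconn.nonempty
    rw [div_le_iff₀ (by positivity), hcard]
    linarith
  rw [ge_iff_le, SimpleGraph.card_filter_edgeFinset_eq_card_interedges]
  push_cast at hexpand
  calc (1 / 2) * ((q : ℝ) + 1 - Real.sqrt q) * A.card
      ≤ ((q : ℝ) + 1 - Real.sqrt q) * A.card * (1 - A.card / Fintype.card V) := by
        have hk : 0 ≤ ((q : ℝ) + 1 - Real.sqrt q) * A.card :=
          mul_nonneg (sub_nonneg.2 hsqrt) A.card.cast_nonneg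
        linarith [mul_nonneg hk (sub_nonneg.2 hhalf)]
    _ ≤ _ := hexpand

/-- Let `q ≥ 2` and let `G` be a finite connected bipartite
`(q+1)`-regular graph on `Q` vertices whose adjacency eigenvalues other than `±(q+1)` have
absolute value at most `√q`.  Then every vertex subset `A` with `|A| ≤ Q/2` satisfies
`|E(A,Ā)| ≥ (1/2)(q+1−√q)|A|`. -/
theorem bipartite_expander_edge_boundary
    {V : Type} [Fintype V] [DecidableEq V] (q Q : ℕ) (hq : 2 ≤ q)
    (G : SimpleGraph V) (hconn : G.Connected) (hcard : Fintype.card V = Q)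
    (hbip : ∃ C : V → Bool, ∀ u w, G.Adj u w → C u ≠ C w)
    (hreg : ∀ v : V, G.degree v = q + 1)
    (heig : ∀ mu : ℝ, (∃ f : V → ℝ, f ≠ 0 ∧ G.adjMatrix ℝ *ᵥ f = mu • f) →
      mu = (q : ℝ) + 1 ∨ mu = -((q : ℝ) + 1) ∨ |mu| ≤ Real.sqrt q)
    (A : Finset V) (hA : (A.card : ℝ) ≤ (Q : ℝ) / 2) :
    ((G.edgeFinset.filter fun e => ∃ u ∈ e, ∃ w ∈ e, u ∈ A ∧ w ∉ A).card : ℝ) ≥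
      (1 / 2) * ((q : ℝ) + 1 - Real.sqrt q) * (A.card : ℝ) :=
  bipartite_expander_edge_boundary_general q Q G hconn hcard hreg heig A hA
end
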